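/- arXiv:2503.02155 — 2 statements merged into one kernel-verified Lean document; each statement's English description precedes it below -/
import Mathlib

section
/- Under the SGD setup, if the step sizes satisfy 0 ≤ α_m ≤ 1/L and E[f(w_1)] < ∞, then for every M ≥ 2: ∑_{m=1}^{M−1} α_m · E[|∇f(w_m)|²] ≤ 2·E[f(w_1)] + σ²L · ∑_{m=1}^{M−1} α_m². -/
open Filter MeasureTheory ProbabilityTheory

section Aux

variable {d : ℕ}

local notation "F" => EuclideanSpace ℝ (Fin d)

lemma sgd_grad_contDiff (f : F → ℝ) (hf : ContDiff ℝ 2 f) : ContDiff ℝ 1 (gradient f) := by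
  have h1 : ContDiff ℝ 1 (fderiv ℝ f) := hf.fderiv_right (m := 1) (by norm_num)
  have : gradient f = fun x => (InnerProductSpace.toDual ℝ F).symm (fderiv ℝ f x) := rfl
  rw [this]
  exact (LinearIsometryEquiv.contDiff (InnerProductSpace.toDual ℝ F).symm).comp h1

lemma sgd_grad_lip (f : F → ℝ) (L : ℝ) (hf : ContDiff ℝ 2 f)
    (hHess : ∀ x, ‖fderiv ℝ (gradient f) x‖ ≤ L) (x y : F) :
    ‖gradient f y - gradient f x‖ ≤ L * ‖y - x‖ := by
  have hdiff : ∀ z ∈ (Set.univ : Set F), DifferentiableAt ℝ (gradient f) z := fun z _ =>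
    (sgd_grad_contDiff f hf).differentiable (by norm_num) z
  have := (convex_univ (𝕜 := ℝ) (E := F)).norm_image_sub_le_of_norm_fderiv_le hdiff
    (fun z _ => hHess z) (Set.mem_univ x) (Set.mem_univ y)
  simpa using this

lemma sgd_taylor_ub (f : F → ℝ) (L : ℝ) (hf : ContDiff ℝ 2 f)
    (hHess : ∀ x, ‖fderiv ℝ (gradient f) x‖ ≤ L) (x v : F) :
    f (x + v) ≤ f x + inner ℝ (gradient f x) v + L / 2 * ‖v‖ ^ 2 := by
  have hfd : Differentiable ℝ f := hf.differentiable (by norm_num)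
  have hderiv : ∀ t : ℝ, HasDerivAt (fun t : ℝ => f (x + t • v))
      ((fderiv ℝ f (x + t • v)) v) t := by
    intro t
    have hcurve : HasDerivAt (fun t : ℝ => x + t • v) v t := by
      simpa using ((hasDerivAt_id t).smul_const v).const_add x
    exact (hfd (x + t • v)).hasFDerivAt.comp_hasDerivAt t hcurve
  have hcont : Continuous fun t : ℝ => (fderiv ℝ f (x + t • v)) v := by
    have h1 : Continuous (fderiv ℝ f) := (hf.fderiv_right (m := 1) (by norm_num)).continuous
    exact (h1.comp (continuous_const.add (continuous_id.smul continuous_const))).clm_apply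
      continuous_const
  have hftc : f (x + v) - f x = ∫ t in (0:ℝ)..1, (fderiv ℝ f (x + t • v)) v := by
    have := intervalIntegral.integral_eq_sub_of_hasDerivAt
      (f := fun t : ℝ => f (x + t • v)) (f' := fun t : ℝ => (fderiv ℝ f (x + t • v)) v)
      (a := 0) (b := 1) (fun t _ => hderiv t) (hcont.intervalIntegrable 0 1)
    simpa using this.symm
  have hbound : ∀ t ∈ Set.Icc (0:ℝ) 1,
      (fderiv ℝ f (x + t • v)) v ≤ (fderiv ℝ f x) v + L * t * ‖v‖ ^ 2 := by
    intro t ht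
    have h1 : (fderiv ℝ f (x + t • v)) v - (fderiv ℝ f x) v
        = inner ℝ (gradient f (x + t • v) - gradient f x) v := by
      rw [inner_sub_left]
      simp [gradient, InnerProductSpace.toDual_symm_apply]
    have h2 : inner ℝ (gradient f (x + t • v) - gradient f x) v
        ≤ ‖gradient f (x + t • v) - gradient f x‖ * ‖v‖ :=
      real_inner_le_norm _ _
    have h3 : ‖gradient f (x + t • v) - gradient f x‖ ≤ L * (t * ‖v‖) := by
      have := sgd_grad_lip f L hf hHess x (x + t • v)
      simpa [norm_smul, abs_of_nonneg ht.1] using this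
    nlinarith [norm_nonneg v, ht.1, mul_le_mul_of_nonneg_right h3 (norm_nonneg v)]
  have hint : ∫ t in (0:ℝ)..1, (fderiv ℝ f (x + t • v)) v
      ≤ ∫ t in (0:ℝ)..1, ((fderiv ℝ f x) v + L * t * ‖v‖ ^ 2) := by
    apply intervalIntegral.integral_mono_on (by norm_num)
      (hcont.intervalIntegrable 0 1)
    · exact (continuous_const.add ((continuous_const.mul continuous_id).mul
        continuous_const)).intervalIntegrable 0 1
    · exact hbound
  have hval : ∫ t in (0:ℝ)..1, ((fderiv ℝ f x) v + L * t * ‖v‖ ^ 2)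
      = (fderiv ℝ f x) v + L / 2 * ‖v‖ ^ 2 := by
    have heq : (fun t : ℝ => L * t * ‖v‖ ^ 2) = fun t : ℝ => (L * ‖v‖ ^ 2) * t := by
      ext t; ring
    rw [intervalIntegral.integral_add (intervalIntegrable_const)
      ((by fun_prop : Continuous fun t : ℝ => L * t * ‖v‖ ^ 2).intervalIntegrable 0 1),
      heq, intervalIntegral.integral_const_mul, integral_id]
    simp; ring
  have hgrad : (inner ℝ (gradient f x) v : ℝ) = (fderiv ℝ f x) v := by
    simp [gradient, InnerProductSpace.toDual_symm_apply]
  linarith [hftc, hint, hval.le, hval.ge]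

lemma sgd_gradsq_le (f : F → ℝ) (L : ℝ) (hL : 0 < L) (hf : ContDiff ℝ 2 f)
    (hf0 : ∀ x, 0 ≤ f x) (hHess : ∀ x, ‖fderiv ℝ (gradient f) x‖ ≤ L) (x : F) :
    ‖gradient f x‖ ^ 2 ≤ 2 * L * f x := by
  have h := sgd_taylor_ub f L hf hHess x (-((1 / L) • gradient f x))
  have h0 := hf0 (x + -((1 / L) • gradient f x))
  rw [inner_neg_right, inner_smul_right, real_inner_self_eq_norm_sq, norm_neg, norm_smul,
    Real.norm_eq_abs, abs_of_pos (by positivity : (0:ℝ) < 1 / L), mul_pow] at h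
  have e : f x + -(1 / L * ‖gradient f x‖ ^ 2) + L / 2 * ((1 / L) ^ 2 * ‖gradient f x‖ ^ 2)
      = f x - ‖gradient f x‖ ^ 2 / (2 * L) := by
    field_simp
    ring
  rw [e] at h
  have h2 : ‖gradient f x‖ ^ 2 / (2 * L) ≤ f x := by linarith
  rw [div_le_iff₀ (by positivity)] at h2
  linarith

lemma euclid_normsq (x : F) : ‖x‖ ^ 2 = ∑ i, x i ^ 2 := by
  rw [EuclideanSpace.norm_eq, Real.sq_sqrt (by positivity)]
  simp [sq_abs]

lemma euclid_inner (x y : F) : (inner ℝ x y : ℝ) = ∑ i, x i * y i := by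
  simp [PiLp.inner_apply, RCLike.inner_apply, starRingEnd_apply, star_trivial, mul_comm]

lemma euclid_coord_sq_le (x : F) (i : Fin d) : x i ^ 2 ≤ ‖x‖ ^ 2 := by
  rw [euclid_normsq]
  exact Finset.single_le_sum (fun j _ => sq_nonneg (x j)) (Finset.mem_univ i)

lemma sgd_arith (L σ A B G Eg a : ℝ) (hL : 0 < L) (h1 : B ≤ A - a * G + L / 2 * a ^ 2 * Eg)
    (h2 : Eg ≤ G + σ ^ 2) (h3 : 0 ≤ G) (h4 : 0 ≤ Eg) (h5 : L * a ≤ 1) (h6 : 0 ≤ a) :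
    a * G ≤ 2 * (A - B) + σ ^ 2 * L * a ^ 2 := by
  nlinarith [mul_le_mul_of_nonneg_left h2 (by positivity : (0:ℝ) ≤ L / 2 * a ^ 2),
    mul_le_mul_of_nonneg_right h5 (mul_nonneg h6 h3), sq_nonneg a,
    mul_nonneg (mul_nonneg hL.le (sq_nonneg a)) h3, sq_nonneg σ]

end Aux

/-- summed key estimate for SGD. Under the SGD setup (`w 0` is the
initial iterate `w_1`, sequences indexed from `0`), if `0 ≤ α_m ≤ 1/L` and
`E[f(w_0)] < ∞`, then for every `M`,
`∑_{m<M} α_m E[‖∇f(w_m)‖²] ≤ 2 E[f(w_0)] + σ²L ∑_{m<M} α_m²`. -/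
theorem stmt7 {d : ℕ} (f : EuclideanSpace ℝ (Fin d) → ℝ) (L σ : ℝ)
        (hf : ContDiff ℝ 2 f) (hf0 : ∀ x, 0 ≤ f x)
        (hHess : ∀ x, ‖fderiv ℝ (gradient f) x‖ ≤ L) (hL : 0 < L)
        {Ω : Type*} [inst : MeasurableSpace Ω] (μ : Measure Ω) [IsProbabilityMeasure μ]
        (𝓕 : ℕ → MeasurableSpace Ω) (h𝓕 : ∀ m, 𝓕 m ≤ inst)
        (w g : ℕ → Ω → EuclideanSpace ℝ (Fin d)) (α : ℕ → ℝ)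
        (hw : ∀ m, StronglyMeasurable[𝓕 m] (w m))
        (hg : ∀ m, AEStronglyMeasurable (g m) μ)
        (hiter : ∀ m, ∀ ω, w (m + 1) ω = w m ω - α m • g m ω)
        (hunbiased : ∀ m, μ[g m | 𝓕 m] =ᵐ[μ] fun ω => gradient f (w m ω))
        (hg2 : ∀ m, Integrable (fun ω => ‖g m ω‖ ^ 2) μ)
        (hvar : ∀ m, ∫ ω, (‖g m ω‖ ^ 2 - ‖gradient f (w m ω)‖ ^ 2) ∂μ ≤ σ ^ 2)
        (hα : ∀ m, 0 ≤ α m) (hαL : ∀ m, α m ≤ 1 / L)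
    (hint : Integrable (fun ω => f (w 0 ω)) μ) :
    ∀ M : ℕ,
      ∑ m ∈ Finset.range M, α m * ∫ ω, ‖gradient f (w m ω)‖ ^ 2 ∂μ ≤
        2 * (∫ ω, f (w 0 ω) ∂μ) + σ ^ 2 * L * ∑ m ∈ Finset.range M, (α m) ^ 2 := by
  classical
  set X : ℕ → Ω → EuclideanSpace ℝ (Fin d) := fun m ω => gradient f (w m ω) with hXdef
  have hXapp : ∀ m ω, gradient f (w m ω) = X m ω := fun _ _ => rfl
  have hgradc : Continuous (gradient f) := (sgd_grad_contDiff f hf).continuous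
  have hfc : Continuous f := hf.continuous
  have hXm : ∀ m, StronglyMeasurable[𝓕 m] (X m) := fun m =>
    hgradc.comp_stronglyMeasurable (hw m)
  have hunb' : ∀ m, μ[g m | 𝓕 m] =ᵐ[μ] fun ω => X m ω := hunbiased
  have hvarX : ∀ m, ∫ ω, (‖g m ω‖ ^ 2 - ‖X m ω‖ ^ 2) ∂μ ≤ σ ^ 2 := hvar
  clear_value X
  have hXae : ∀ m, AEStronglyMeasurable (X m) μ := fun m =>
    ((hXm m).mono (h𝓕 m)).aestronglyMeasurable
  have hwae : ∀ m, AEStronglyMeasurable (w m) μ := fun m =>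
    ((hw m).mono (h𝓕 m)).aestronglyMeasurable
  have hfwae : ∀ m, AEStronglyMeasurable (fun ω => f (w m ω)) μ := fun m =>
    hfc.comp_aestronglyMeasurable (hwae m)
  have hX2ae : ∀ m, AEStronglyMeasurable (fun ω => ‖X m ω‖ ^ 2) μ := fun m =>
    ((continuous_norm.pow 2).comp_aestronglyMeasurable (hXae m))
  -- integrability of f ∘ w m, by induction
  have hfint : ∀ m, Integrable (fun ω => f (w m ω)) μ := by
    intro m
    induction m with
    | zero => exact hint
    | succ m ih =>
      have hX2 : Integrable (fun ω => ‖X m ω‖ ^ 2) μ := by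
        refine Integrable.mono' (ih.const_mul (2 * L)) (hX2ae m) (ae_of_all _ fun ω => ?_)
        rw [Real.norm_eq_abs, abs_of_nonneg (sq_nonneg _), ← hXapp m ω]
        exact sgd_gradsq_le f L hL hf hf0 hHess (w m ω)
      have hdom : Integrable (fun ω => f (w m ω) + α m / 2 * (‖X m ω‖ ^ 2 + ‖g m ω‖ ^ 2)
          + L / 2 * α m ^ 2 * ‖g m ω‖ ^ 2) μ :=
        (ih.add (((hX2.add (hg2 m))).const_mul (α m / 2))).add ((hg2 m).const_mul (L / 2 * α m ^ 2))
      refine Integrable.mono' hdom (hfwae (m + 1)) (ae_of_all _ fun ω => ?_)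
      rw [Real.norm_eq_abs, abs_of_nonneg (hf0 _)]
      have hit : w (m + 1) ω = w m ω + -(α m • g m ω) := by
        rw [hiter m ω]; abel
      have ht := sgd_taylor_ub f L hf hHess (w m ω) (-(α m • g m ω))
      rw [← hit, inner_neg_right, inner_smul_right, norm_neg, norm_smul, Real.norm_eq_abs,
        abs_of_nonneg (hα m), hXapp m ω] at ht
      have hcs : |(inner ℝ (X m ω) (g m ω) : ℝ)| ≤ ‖X m ω‖ * ‖g m ω‖ := abs_real_inner_le_norm _ _
      have h2 : -(inner ℝ (X m ω) (g m ω) : ℝ) ≤ 1 / 2 * (‖X m ω‖ ^ 2 + ‖g m ω‖ ^ 2) := by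
        nlinarith [hcs, neg_abs_le (inner ℝ (X m ω) (g m ω) : ℝ),
          sq_nonneg (‖X m ω‖ - ‖g m ω‖)]
      have hxy : -(α m * (inner ℝ (X m ω) (g m ω) : ℝ))
          ≤ α m * (1 / 2 * (‖X m ω‖ ^ 2 + ‖g m ω‖ ^ 2)) := by
        calc -(α m * (inner ℝ (X m ω) (g m ω) : ℝ)) = α m * -(inner ℝ (X m ω) (g m ω) : ℝ) := by ring
          _ ≤ _ := mul_le_mul_of_nonneg_left h2 (hα m)
      nlinarith [ht, hxy]
  have hX2int : ∀ m, Integrable (fun ω => ‖X m ω‖ ^ 2) μ := by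
    intro m
    refine Integrable.mono' ((hfint m).const_mul (2 * L)) (hX2ae m) (ae_of_all _ fun ω => ?_)
    rw [Real.norm_eq_abs, abs_of_nonneg (sq_nonneg _), ← hXapp m ω]
    exact sgd_gradsq_le f L hL hf hf0 hHess (w m ω)
  -- integrability of inner products
  have hinner_ae : ∀ m, AEStronglyMeasurable (fun ω => (inner ℝ (X m ω) (g m ω) : ℝ)) μ :=
    fun m => (hXae m).inner (hg m)
  have hinner_int : ∀ m, Integrable (fun ω => (inner ℝ (X m ω) (g m ω) : ℝ)) μ := by
    intro m
    refine Integrable.mono' (((hX2int m).add (hg2 m)).const_mul (1 / 2)) (hinner_ae m)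
      (ae_of_all _ fun ω => ?_)
    simp only [Pi.add_apply]
    rw [Real.norm_eq_abs]
    have := abs_real_inner_le_norm (X m ω) (g m ω)
    nlinarith [sq_nonneg (‖X m ω‖ - ‖g m ω‖)]
  -- the conditional expectation step
  have hEinner : ∀ m, ∫ ω, (inner ℝ (X m ω) (g m ω) : ℝ) ∂μ = ∫ ω, ‖X m ω‖ ^ 2 ∂μ := by
    intro m
    haveI : SigmaFinite (μ.trim (h𝓕 m)) := by
      have : IsFiniteMeasure (μ.trim (h𝓕 m)) := isFiniteMeasure_trim _
      infer_instance
    have hgint : Integrable (g m) μ := by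
      refine Integrable.mono' ((hg2 m).add (integrable_const 1)) (hg m)
        (ae_of_all _ fun ω => ?_)
      simp only [Pi.add_apply]
      nlinarith [sq_nonneg (‖g m ω‖ - 1), norm_nonneg (g m ω)]
    have hXint : Integrable (X m) μ := by
      refine Integrable.mono' ((hX2int m).add (integrable_const 1)) (hXae m)
        (ae_of_all _ fun ω => ?_)
      simp only [Pi.add_apply]
      nlinarith [sq_nonneg (‖X m ω‖ - 1), norm_nonneg (X m ω)]
    have hgii : ∀ i, Integrable (fun ω => g m ω i) μ := fun i =>
      (EuclideanSpace.proj i (𝕜 := ℝ)).integrable_comp hgint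
    have hXii : ∀ i, Integrable (fun ω => X m ω i) μ := fun i =>
      (EuclideanSpace.proj i (𝕜 := ℝ)).integrable_comp hXint
    have hXiim : ∀ i, StronglyMeasurable[𝓕 m] (fun ω => X m ω i) := fun i =>
      (EuclideanSpace.proj i (𝕜 := ℝ)).continuous.comp_stronglyMeasurable (hXm m)
    have hcond : ∀ i : Fin d, (fun ω => X m ω i) =ᵐ[μ] μ[fun ω => g m ω i|𝓕 m] := by
      intro i
      refine ae_eq_condExp_of_forall_setIntegral_eq (h𝓕 m) (hgii i)
        (fun s _ _ => (hXii i).integrableOn) (fun s hs _ => ?_)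
        ((hXiim i).aestronglyMeasurable)
      have h1 : ∫ ω in s, g m ω ∂μ = ∫ ω in s, X m ω ∂μ := by
        rw [← setIntegral_condExp (h𝓕 m) hgint hs]
        refine setIntegral_congr_ae (h𝓕 m s hs) ?_
        filter_upwards [hunb' m] with ω hω _
        exact hω
      calc ∫ ω in s, X m ω i ∂μ
          = (EuclideanSpace.proj i (𝕜 := ℝ)) (∫ ω in s, X m ω ∂μ) :=
            ((EuclideanSpace.proj i (𝕜 := ℝ)).integral_comp_comm hXint.integrableOn)
        _ = (EuclideanSpace.proj i (𝕜 := ℝ)) (∫ ω in s, g m ω ∂μ) := by rw [h1]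
        _ = ∫ ω in s, g m ω i ∂μ :=
            ((EuclideanSpace.proj i (𝕜 := ℝ)).integral_comp_comm hgint.integrableOn).symm
    have hprod_int : ∀ i : Fin d, Integrable (fun ω => X m ω i * g m ω i) μ := by
      intro i
      refine Integrable.mono' (((hX2int m).add (hg2 m)).const_mul (1 / 2))
        (((hXii i).aestronglyMeasurable).mul ((hgii i).aestronglyMeasurable))
        (ae_of_all _ fun ω => ?_)
      simp only [Pi.add_apply]
      rw [Real.norm_eq_abs, abs_mul]
      have h1 : X m ω i ^ 2 ≤ ‖X m ω‖ ^ 2 := euclid_coord_sq_le _ i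
      have h2 : g m ω i ^ 2 ≤ ‖g m ω‖ ^ 2 := euclid_coord_sq_le _ i
      nlinarith [sq_nonneg (|X m ω i| - |g m ω i|), sq_abs (X m ω i), sq_abs (g m ω i),
        abs_nonneg (X m ω i), abs_nonneg (g m ω i)]
    have hXX_int : ∀ i : Fin d, Integrable (fun ω => X m ω i * X m ω i) μ := by
      intro i
      refine Integrable.mono' (hX2int m)
        (((hXii i).aestronglyMeasurable).mul ((hXii i).aestronglyMeasurable))
        (ae_of_all _ fun ω => ?_)
      rw [Real.norm_eq_abs, abs_mul]
      have h1 : X m ω i ^ 2 ≤ ‖X m ω‖ ^ 2 := euclid_coord_sq_le _ i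
      nlinarith [sq_abs (X m ω i), abs_nonneg (X m ω i)]
    have hcoords : ∀ i : Fin d, ∫ ω, X m ω i * g m ω i ∂μ = ∫ ω, X m ω i * X m ω i ∂μ := by
      intro i
      have e1 : ∫ ω, X m ω i * g m ω i ∂μ
          = ∫ ω, (μ[(fun ω => X m ω i) * (fun ω => g m ω i)|𝓕 m]) ω ∂μ :=
        (integral_condExp (h𝓕 m)).symm
      have e2 : μ[(fun ω => X m ω i) * (fun ω => g m ω i)|𝓕 m]
          =ᵐ[μ] (fun ω => X m ω i) * μ[fun ω => g m ω i|𝓕 m] :=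
        condExp_mul_of_stronglyMeasurable_left (hXiim i) (hprod_int i) (hgii i)
      have e3 : (fun ω => X m ω i) * μ[fun ω => g m ω i|𝓕 m]
          =ᵐ[μ] fun ω => X m ω i * X m ω i := by
        filter_upwards [hcond i] with ω hω
        simp [Pi.mul_apply, ← hω]
      rw [e1, integral_congr_ae (e2.trans e3)]
    calc ∫ ω, (inner ℝ (X m ω) (g m ω) : ℝ) ∂μ
        = ∫ ω, ∑ i, X m ω i * g m ω i ∂μ := by
          refine integral_congr_ae (ae_of_all _ fun ω => ?_)
          exact euclid_inner _ _
      _ = ∑ i, ∫ ω, X m ω i * g m ω i ∂μ := integral_finset_sum _ (fun i _ => hprod_int i)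
      _ = ∑ i, ∫ ω, X m ω i * X m ω i ∂μ := by
          exact Finset.sum_congr rfl (fun i _ => hcoords i)
      _ = ∫ ω, ∑ i, X m ω i * X m ω i ∂μ := (integral_finset_sum _ (fun i _ => hXX_int i)).symm
      _ = ∫ ω, ‖X m ω‖ ^ 2 ∂μ := by
          refine integral_congr_ae (ae_of_all _ fun ω => ?_)
          show ∑ i, X m ω i * X m ω i = ‖X m ω‖ ^ 2
          rw [euclid_normsq]
          exact Finset.sum_congr rfl (fun i _ => (pow_two (X m ω i)).symm)
  -- per-step estimate
  have hstep : ∀ m, α m * ∫ ω, ‖X m ω‖ ^ 2 ∂μ ≤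
      2 * ((∫ ω, f (w m ω) ∂μ) - ∫ ω, f (w (m + 1) ω) ∂μ) + σ ^ 2 * L * α m ^ 2 := by
    intro m
    have hptw : ∀ ω, f (w (m + 1) ω) ≤ f (w m ω) - α m * (inner ℝ (X m ω) (g m ω) : ℝ)
        + L / 2 * α m ^ 2 * ‖g m ω‖ ^ 2 := by
      intro ω
      have hit : w (m + 1) ω = w m ω + -(α m • g m ω) := by rw [hiter m ω]; abel
      have ht := sgd_taylor_ub f L hf hHess (w m ω) (-(α m • g m ω))
      rw [← hit, inner_neg_right, inner_smul_right, norm_neg, norm_smul, Real.norm_eq_abs,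
        abs_of_nonneg (hα m), hXapp m ω] at ht
      nlinarith [ht]
    have hrhs_int : Integrable (fun ω => f (w m ω) - α m * (inner ℝ (X m ω) (g m ω) : ℝ)
        + L / 2 * α m ^ 2 * ‖g m ω‖ ^ 2) μ :=
      ((hfint m).sub ((hinner_int m).const_mul (α m))).add ((hg2 m).const_mul (L / 2 * α m ^ 2))
    have hmono : ∫ ω, f (w (m + 1) ω) ∂μ ≤ ∫ ω, (f (w m ω)
        - α m * (inner ℝ (X m ω) (g m ω) : ℝ) + L / 2 * α m ^ 2 * ‖g m ω‖ ^ 2) ∂μ :=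
      integral_mono (hfint (m + 1)) hrhs_int hptw
    have hA : Integrable (fun ω => f (w m ω) - α m * (inner ℝ (X m ω) (g m ω) : ℝ)) μ := by
      exact (hfint m).sub ((hinner_int m).const_mul (α m))
    have hB : Integrable (fun ω => L / 2 * α m ^ 2 * ‖g m ω‖ ^ 2) μ := by
      exact (hg2 m).const_mul (L / 2 * α m ^ 2)
    have hC : Integrable (fun ω => α m * (inner ℝ (X m ω) (g m ω) : ℝ)) μ := by
      exact (hinner_int m).const_mul (α m)
    have hsplit : ∫ ω, (f (w m ω) - α m * (inner ℝ (X m ω) (g m ω) : ℝ)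
        + L / 2 * α m ^ 2 * ‖g m ω‖ ^ 2) ∂μ
        = (∫ ω, f (w m ω) ∂μ) - α m * (∫ ω, (inner ℝ (X m ω) (g m ω) : ℝ) ∂μ)
          + L / 2 * α m ^ 2 * ∫ ω, ‖g m ω‖ ^ 2 ∂μ := by
      rw [integral_add hA hB, integral_sub (hfint m) hC,
        integral_const_mul, integral_const_mul]
    have hvar' : ∫ ω, ‖g m ω‖ ^ 2 ∂μ ≤ (∫ ω, ‖X m ω‖ ^ 2 ∂μ) + σ ^ 2 := by
      have := hvarX m
      rw [integral_sub (hg2 m) (hX2int m)] at this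
      linarith
    have hG : 0 ≤ ∫ ω, ‖X m ω‖ ^ 2 ∂μ := integral_nonneg (fun ω => sq_nonneg _)
    have hg2n : 0 ≤ ∫ ω, ‖g m ω‖ ^ 2 ∂μ := integral_nonneg (fun ω => sq_nonneg _)
    have hLα : L * α m ≤ 1 := by
      have := hαL m
      calc L * α m ≤ L * (1 / L) := by nlinarith
        _ = 1 := by field_simp
    rw [hEinner m] at hsplit
    have hkey : ∫ ω, f (w (m + 1) ω) ∂μ ≤ (∫ ω, f (w m ω) ∂μ)
        - α m * (∫ ω, ‖X m ω‖ ^ 2 ∂μ) + L / 2 * α m ^ 2 * ∫ ω, ‖g m ω‖ ^ 2 ∂μ := by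
      rw [← hsplit]; exact hmono
    exact sgd_arith L σ _ _ _ _ _ hL hkey hvar' hG hg2n hLα (hα m)
  -- telescoping
  have haux : ∀ M : ℕ,
      (∑ m ∈ Finset.range M, α m * ∫ ω, ‖X m ω‖ ^ 2 ∂μ) + 2 * ∫ ω, f (w M ω) ∂μ ≤
        2 * (∫ ω, f (w 0 ω) ∂μ) + σ ^ 2 * L * ∑ m ∈ Finset.range M, (α m) ^ 2 := by
    intro M
    induction M with
    | zero => simp
    | succ M ih =>
      rw [Finset.sum_range_succ, Finset.sum_range_succ]
      have := hstep M
      linarith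
  intro M
  have hfM : 0 ≤ ∫ ω, f (w M ω) ∂μ := integral_nonneg (fun ω => hf0 _)
  have h := haux M
  simp only [hXapp]
  linarith
end

section
/- Under the SGD setup, suppose in addition that ∑_{m=1}^∞ α_m = ∞, ∑_{m=1}^∞ α_m² < ∞, 0 ≤ α_m ≤ 1/L, E[f(w_1)] < ∞, and f is coercive (f(w) → ∞ as |w| → ∞). Then w_m converges in probability to the critical set 𝓒 := {w : ∇f(w) = 0}: for every ε > 0, P(dist(w_m, 𝓒) > ε) → 0 as m → ∞. -/
open Filter MeasureTheory ProbabilityTheory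

section Aux

open InnerProductSpace Finset ENNReal

variable {E : Type*} [NormedAddCommGroup E] [InnerProductSpace ℝ E] [CompleteSpace E]



lemma inner_gradient_eq (f : E → ℝ) (x v : E) :
    @inner ℝ _ _ (gradient f x) v = fderiv ℝ f x v := by
  rw [gradient, InnerProductSpace.toDual_symm_apply]

lemma descent {f : E → ℝ} {L : ℝ} (hf : ContDiff ℝ 2 f) (hL : 0 < L)
    (hlip : ∀ x y, ‖gradient f x - gradient f y‖ ≤ L * ‖x - y‖) (x y : E) :
    f y ≤ f x + @inner ℝ _ _ (gradient f x) (y - x) + L / 2 * ‖y - x‖ ^ 2 := by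
  set v := y - x with hv
  have hdf : Differentiable ℝ f := hf.differentiable (by norm_num)
  have hφ : ∀ t : ℝ, HasDerivAt (fun t : ℝ => f (x + t • v))
      (@inner ℝ _ _ (gradient f (x + t • v)) v) t := by
    intro t
    have hline : HasDerivAt (fun t : ℝ => x + t • v) v t := by
      simpa using ((hasDerivAt_id t).smul_const v).const_add x
    have := (hdf (x + t • v)).hasFDerivAt.comp_hasDerivAt t hline
    rw [inner_gradient_eq]; exact this
  set c : ℝ := @inner ℝ _ _ (gradient f x) v with hc
  set ψ : ℝ → ℝ := fun t => f x + t * c + L / 2 * t ^ 2 * ‖v‖ ^ 2 - f (x + t • v) with hψ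
  have hψd : ∀ t : ℝ, HasDerivAt ψ
      (c + L * t * ‖v‖ ^ 2 - @inner ℝ _ _ (gradient f (x + t • v)) v) t := by
    intro t
    have ha : HasDerivAt (fun t : ℝ => f x + t * c) c t := by
      simpa using ((hasDerivAt_id t).mul_const c).const_add (f x)
    have hb : HasDerivAt (fun t : ℝ => L / 2 * t ^ 2 * ‖v‖ ^ 2) (L * t * ‖v‖ ^ 2) t := by
      have h := ((hasDerivAt_pow 2 t).const_mul (L / 2)).mul_const (‖v‖ ^ 2)
      refine h.congr_deriv ?_
      push_cast; ring
    exact (ha.add hb).sub (hφ t)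
  have hd_nonneg : ∀ t ∈ Set.Icc (0:ℝ) 1,
      0 ≤ c + L * t * ‖v‖ ^ 2 - @inner ℝ _ _ (gradient f (x + t • v)) v := by
    intro t ht
    have h1 : @inner ℝ _ _ (gradient f (x + t • v)) v - c
        = @inner ℝ _ _ (gradient f (x + t • v) - gradient f x) v := by
      rw [inner_sub_left]
    have h2 : @inner ℝ _ _ (gradient f (x + t • v) - gradient f x) v
        ≤ ‖gradient f (x + t • v) - gradient f x‖ * ‖v‖ := real_inner_le_norm _ _
    have h3 : ‖gradient f (x + t • v) - gradient f x‖ ≤ L * (t * ‖v‖) := by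
      have := hlip (x + t • v) x
      simpa [norm_smul, abs_of_nonneg ht.1] using this
    have h4 : ‖gradient f (x + t • v) - gradient f x‖ * ‖v‖ ≤ L * (t * ‖v‖) * ‖v‖ :=
      mul_le_mul_of_nonneg_right h3 (norm_nonneg _)
    nlinarith [norm_nonneg v]
  have hmono : MonotoneOn ψ (Set.Icc (0:ℝ) 1) := by
    apply monotoneOn_of_deriv_nonneg (convex_Icc 0 1)
    · exact (Differentiable.continuous fun t => (hψd t).differentiableAt).continuousOn
    · exact fun t ht => ((hψd t).differentiableAt).differentiableWithinAt
    · intro t ht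
      rw [interior_Icc] at ht
      rw [(hψd t).deriv]
      exact hd_nonneg t ⟨ht.1.le, ht.2.le⟩
  have h01 := hmono (Set.mem_Icc.2 ⟨le_refl 0, zero_le_one⟩) (Set.mem_Icc.2 ⟨zero_le_one, le_refl 1⟩) zero_le_one
  have e0 : ψ 0 = 0 := by simp [hψ]
  have e1 : ψ 1 = f x + c + L / 2 * ‖v‖ ^ 2 - f y := by
    simp [hψ, hv]
  rw [e0, e1] at h01
  linarith



lemma grad_diff {f : E → ℝ} (hf : ContDiff ℝ 2 f) :
    Differentiable ℝ (gradient f) := by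
  have h1 : ContDiff ℝ 1 (fderiv ℝ f) := hf.fderiv_right (by norm_num)
  exact ((InnerProductSpace.toDual ℝ E).symm.differentiable).comp (h1.differentiable (by norm_num))

lemma grad_cont {f : E → ℝ} (hf : ContDiff ℝ 2 f) : Continuous (gradient f) :=
  (grad_diff hf).continuous

lemma grad_lipschitz {f : E → ℝ} {L : ℝ} (hf : ContDiff ℝ 2 f)
    (hL : 0 < L) (hHess : ∀ x, ‖fderiv ℝ (gradient f) x‖ ≤ L) :
    ∀ x y, ‖gradient f x - gradient f y‖ ≤ L * ‖x - y‖ := by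
  have hlip : LipschitzWith L.toNNReal (gradient f) := by
    apply lipschitzWith_of_nnnorm_fderiv_le (grad_diff hf)
    intro x
    rw [← NNReal.coe_le_coe, coe_nnnorm, Real.coe_toNNReal _ hL.le]
    exact hHess x
  intro x y
  have := hlip.dist_le_mul x y
  rwa [dist_eq_norm, dist_eq_norm, Real.coe_toNNReal _ hL.le] at this



lemma grad_sq_le {f : E → ℝ} {L : ℝ} (hL : 0 < L) (hf0 : ∀ z, 0 ≤ f z)
    (hdesc : ∀ x y, f y ≤ f x + @inner ℝ _ _ (gradient f x) (y - x) + L / 2 * ‖y - x‖ ^ 2)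
    (x : E) : ‖gradient f x‖ ^ 2 ≤ 2 * L * f x := by
  have h := hdesc x (x - L⁻¹ • gradient f x)
  have h0 := hf0 (x - L⁻¹ • gradient f x)
  have e1 : x - L⁻¹ • gradient f x - x = -(L⁻¹ • gradient f x) := by abel
  rw [e1] at h
  have e2 : @inner ℝ _ _ (gradient f x) (-(L⁻¹ • gradient f x)) = -(L⁻¹ * ‖gradient f x‖ ^ 2) := by
    rw [inner_neg_right, real_inner_smul_right, real_inner_self_eq_norm_sq]
  have e3 : ‖-(L⁻¹ • gradient f x)‖ ^ 2 = L⁻¹ ^ 2 * ‖gradient f x‖ ^ 2 := by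
    rw [norm_neg, norm_smul]
    simp [abs_of_nonneg (inv_nonneg.2 hL.le), mul_pow]
  rw [e2, e3] at h
  have hL2 : L / 2 * (L⁻¹ ^ 2 * ‖gradient f x‖ ^ 2) = L⁻¹ / 2 * ‖gradient f x‖ ^ 2 := by
    field_simp
  rw [hL2] at h
  have key : L⁻¹ / 2 * ‖gradient f x‖ ^ 2 ≤ f x := by linarith
  have := mul_le_mul_of_nonneg_left key (by positivity : (0:ℝ) ≤ 2 * L)
  have hL' : L * L⁻¹ = 1 := mul_inv_cancel₀ hL.ne'
  nlinarith

end Aux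

section Seq
open Finset

lemma seq_to_zero {a G : ℕ → ℝ} {C : ℝ} (hC : 0 < C) (ha : ∀ m, 0 ≤ a m)
    (hG : ∀ m, 0 ≤ G m) (hstep : ∀ m, G (m + 1) ≤ G m + C * a m)
    (ha0 : Tendsto a atTop (nhds 0))
    (hsum : Summable (fun m => a m * G m))
    (hdiv : Tendsto (fun M => ∑ m ∈ Finset.range M, a m) atTop atTop) :
    Tendsto G atTop (nhds 0) := by
  -- backward bound
  have hback : ∀ j m, j ≤ m → G m ≤ G j + C * ∑ i ∈ Finset.Ico j m, a i := by
    intro j m hjm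
    induction m, hjm using Nat.le_induction with
    | base => simp
    | succ m hjm ih =>
      calc G (m + 1) ≤ G m + C * a m := hstep m
        _ ≤ G j + C * ∑ i ∈ Finset.Ico j m, a i + C * a m := by linarith
        _ = G j + C * ∑ i ∈ Finset.Ico j (m + 1), a i := by
            rw [Finset.sum_Ico_succ_top hjm]; ring
  rw [Metric.tendsto_atTop]
  intro ε hε
  set ε' := ε / 2 with hε'def
  have hε' : 0 < ε' := by positivity
  set c := ε' / (4 * C) with hcdef
  have hc : 0 < c := by positivity
  set τ := ε' / 2 * c with hτdef
  have hτ : 0 < τ := by positivity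
  -- choose N with small step sizes and small tail
  have h1 : ∀ᶠ m in atTop, a m ≤ c := by
    filter_upwards [ha0.eventually (gt_mem_nhds hc)] with m hm using hm.le
  have h2 : ∀ᶠ N in atTop, ∑' k, a (k + N) * G (k + N) < τ := by
    have := tendsto_sum_nat_add (fun m => a m * G m)
    exact this.eventually (gt_mem_nhds hτ)
  obtain ⟨N, hN1, hN2⟩ := ((eventually_forall_ge_atTop.2 h1).and h2).exists
  -- tail bound for window sums
  have htail : ∀ m, ∑ j ∈ Finset.Ico N m, a j * G j < τ := by
    intro m
    rcases le_or_gt N m with hNm | hNm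
    · have hrw : ∑ j ∈ Finset.Ico N m, a j * G j
          = ∑ i ∈ Finset.range (m - N), a (i + N) * G (i + N) := by
        rw [Finset.sum_Ico_eq_sum_range]
        exact Finset.sum_congr rfl fun i _ => by rw [add_comm]
      have hsum' : Summable (fun k => a (k + N) * G (k + N)) :=
        (summable_nat_add_iff N).mpr hsum
      have hle : ∑ i ∈ Finset.range (m - N), a (i + N) * G (i + N)
          ≤ ∑' k, a (k + N) * G (k + N) :=
        Summable.sum_le_tsum _ (fun i _ => mul_nonneg (ha _) (hG _)) hsum'
      rw [hrw]; exact lt_of_le_of_lt hle hN2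
    · rw [Finset.Ico_eq_empty (by omega)]
      simpa using hτ
  -- main claim
  have main : ∀ m, c ≤ ∑ i ∈ Finset.Ico N m, a i → G m ≤ ε' := by
    intro m hcm
    by_contra hGm
    push_neg at hGm
    have hNm : N ≤ m := by
      by_contra h
      push_neg at h
      rw [Finset.Ico_eq_empty (by omega)] at hcm
      simp at hcm; linarith
    set T := (Finset.Icc N m).filter (fun k => c ≤ ∑ i ∈ Finset.Ico k m, a i) with hT
    have hNT : N ∈ T := by
      rw [hT, Finset.mem_filter]
      exact ⟨Finset.mem_Icc.2 ⟨le_refl N, hNm⟩, hcm⟩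
    have hTne : T.Nonempty := ⟨N, hNT⟩
    set k := T.max' hTne with hk
    have hkT : k ∈ T := T.max'_mem hTne
    rw [hT, Finset.mem_filter, Finset.mem_Icc] at hkT
    obtain ⟨⟨hNk, hkm⟩, hck⟩ := hkT
    have hkm' : k < m := by
      rcases lt_or_eq_of_le hkm with h | h
      · exact h
      · exfalso; rw [h, Finset.Ico_self] at hck; simp at hck; linarith
    have hk1 : ¬ c ≤ ∑ i ∈ Finset.Ico (k + 1) m, a i := by
      intro hcon
      have : k + 1 ∈ T := by
        rw [hT, Finset.mem_filter]
        exact ⟨Finset.mem_Icc.2 ⟨by omega, by omega⟩, hcon⟩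
      have := T.le_max' _ this
      omega
    push_neg at hk1
    have hwin : ∑ i ∈ Finset.Ico k m, a i < 2 * c := by
      rw [Finset.sum_eq_sum_Ico_succ_bot hkm']
      have hak : a k ≤ c := hN1 k hNk
      linarith
    have hGlow : ∀ j ∈ Finset.Ico k m, ε' / 2 ≤ G j := by
      intro j hj
      rw [Finset.mem_Ico] at hj
      have hsub : Finset.Ico j m ⊆ Finset.Ico k m :=
        Finset.Ico_subset_Ico hj.1 le_rfl
      have h5 : ∑ i ∈ Finset.Ico j m, a i ≤ ∑ i ∈ Finset.Ico k m, a i :=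
        Finset.sum_le_sum_of_subset_of_nonneg hsub (fun i _ _ => ha i)
      have h6 := hback j m hj.2.le
      have h7 : C * ∑ i ∈ Finset.Ico j m, a i ≤ C * (2 * c) := by
        apply mul_le_mul_of_nonneg_left _ hC.le
        linarith
      have h8 : C * (2 * c) = ε' / 2 := by
        rw [hcdef]; field_simp; ring
      linarith
    have h9 : ε' / 2 * c ≤ ∑ j ∈ Finset.Ico k m, a j * G j := by
      calc ε' / 2 * c ≤ ε' / 2 * ∑ i ∈ Finset.Ico k m, a i := by
            apply mul_le_mul_of_nonneg_left hck (by linarith)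
        _ = ∑ j ∈ Finset.Ico k m, ε' / 2 * a j := by rw [Finset.mul_sum]
        _ ≤ ∑ j ∈ Finset.Ico k m, a j * G j := by
            apply Finset.sum_le_sum
            intro j hj
            rw [mul_comm]
            exact mul_le_mul_of_nonneg_left (hGlow j hj) (ha j)
    have h10 : ∑ j ∈ Finset.Ico k m, a j * G j ≤ ∑ j ∈ Finset.Ico N m, a j * G j :=
      Finset.sum_le_sum_of_subset_of_nonneg
        (Finset.Ico_subset_Ico hNk le_rfl)
        (fun i _ _ => mul_nonneg (ha i) (hG i))
    have := htail m
    rw [hτdef] at this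
    linarith
  -- eventually the window sum is large
  have hev : ∀ᶠ m in atTop, c ≤ ∑ i ∈ Finset.Ico N m, a i := by
    have h11 : Tendsto (fun m => ∑ i ∈ Finset.range m, a i) atTop atTop := hdiv
    have h12 : ∀ᶠ m in atTop, (∑ i ∈ Finset.range N, a i) + c ≤ ∑ i ∈ Finset.range m, a i :=
      h11.eventually_ge_atTop _
    filter_upwards [h12, eventually_ge_atTop N] with m hm hNm
    rw [Finset.sum_Ico_eq_sub _ hNm]
    linarith
  obtain ⟨M, hM⟩ := (hev.and (eventually_ge_atTop N)).exists_forall_of_atTop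
  refine ⟨M, fun n hn => ?_⟩
  have := main n (hM n hn).1
  rw [Real.dist_eq, sub_zero, abs_of_nonneg (hG n)]
  rw [hε'def] at this
  linarith

section CE
open ENNReal
variable {d : ℕ}



lemma coord_abs_le_norm (x : EuclideanSpace ℝ (Fin d)) (i : Fin d) : |x i| ≤ ‖x‖ := by
  rw [EuclideanSpace.norm_eq]
  have h1 : |x i| ^ 2 ≤ ∑ j, ‖x j‖ ^ 2 := by
    have := Finset.single_le_sum (f := fun j => ‖x j‖ ^ 2)
      (fun j _ => by positivity) (Finset.mem_univ i)
    simpa [Real.norm_eq_abs, sq_abs] using this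
  calc |x i| = Real.sqrt (|x i| ^ 2) := by rw [Real.sqrt_sq_eq_abs, abs_abs]
    _ ≤ Real.sqrt (∑ j, ‖x j‖ ^ 2) := Real.sqrt_le_sqrt h1
  
lemma inner_condexp_integral {Ω : Type*} {m : MeasurableSpace Ω} [m0 : MeasurableSpace Ω]
    (μ : Measure Ω) [IsProbabilityMeasure μ] (hm : m ≤ m0)
    (g X : Ω → EuclideanSpace ℝ (Fin d))
    (hX : StronglyMeasurable[m] X) (hgm : AEStronglyMeasurable g μ)
    (hg2 : Integrable (fun ω => ‖g ω‖ ^ 2) μ) (hX2 : Integrable (fun ω => ‖X ω‖ ^ 2) μ)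
    (hunb : μ[g|m] =ᵐ[μ] X) :
    ∫ ω, @inner ℝ _ _ (X ω) (g ω) ∂μ = ∫ ω, ‖X ω‖ ^ 2 ∂μ := by
  have hXμ : AEStronglyMeasurable X μ := (hX.mono hm).aestronglyMeasurable
  have habs : ∀ (h : Ω → EuclideanSpace ℝ (Fin d)), AEStronglyMeasurable h μ →
      Integrable (fun ω => ‖h ω‖ ^ 2) μ → Integrable h μ := by
    intro h hmeas hint
    apply Integrable.mono' ((integrable_const (1:ℝ)).add hint) hmeas
    filter_upwards with ω
    have : ‖h ω‖ ≤ 1 + ‖h ω‖ ^ 2 := by nlinarith [norm_nonneg (h ω), sq_nonneg (‖h ω‖ - 1)]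
    simpa using this
  have hgint : Integrable g μ := habs g hgm hg2
  have hXint : Integrable X μ := habs X hXμ hX2
  have hbound : Integrable (fun ω => (‖X ω‖ ^ 2 + ‖g ω‖ ^ 2) / 2) μ := by
    exact (hX2.add hg2).div_const 2
  -- coordinate products are integrable
  have hprod_int : ∀ (u v : Ω → EuclideanSpace ℝ (Fin d)), AEStronglyMeasurable u μ →
      AEStronglyMeasurable v μ → Integrable (fun ω => ‖u ω‖ ^ 2) μ →
      Integrable (fun ω => ‖v ω‖ ^ 2) μ → ∀ i : Fin d,
      Integrable (fun ω => u ω i * v ω i) μ := by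
    intro u v hu hv hu2 hv2 i
    apply Integrable.mono' ((hu2.add hv2).div_const 2)
    · exact ((EuclideanSpace.proj (𝕜 := ℝ) i).continuous.comp_aestronglyMeasurable hu).mul
        ((EuclideanSpace.proj (𝕜 := ℝ) i).continuous.comp_aestronglyMeasurable hv)
    · filter_upwards with ω
      have h2 := coord_abs_le_norm (u ω) i
      have h3 := coord_abs_le_norm (v ω) i
      have : |u ω i * v ω i| ≤ ‖u ω‖ * ‖v ω‖ := by
        rw [abs_mul]
        exact mul_le_mul h2 h3 (abs_nonneg _) (norm_nonneg _)
      have h4 : ‖u ω‖ * ‖v ω‖ ≤ (‖u ω‖ ^ 2 + ‖v ω‖ ^ 2) / 2 := by nlinarith [sq_nonneg (‖u ω‖ - ‖v ω‖)]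
      simp only [Real.norm_eq_abs, Pi.add_apply]
      linarith
  have hXgi : ∀ i : Fin d, Integrable (fun ω => X ω i * g ω i) μ :=
    hprod_int X g hXμ hgm hX2 hg2
  have hXXi : ∀ i : Fin d, Integrable (fun ω => X ω i * X ω i) μ :=
    hprod_int X X hXμ hXμ hX2 hX2
  -- per-coordinate conditional expectation
  have hcond : ∀ i : Fin d, (fun ω => X ω i) =ᵐ[μ] μ[fun ω => g ω i|m] := by
    intro i
    have hgi_int : Integrable (fun ω => g ω i) μ := by
      apply Integrable.mono' (habs g hgm hg2).norm
        ((EuclideanSpace.proj (𝕜 := ℝ) i).continuous.comp_aestronglyMeasurable hgm)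
      filter_upwards with ω
      simpa [Real.norm_eq_abs] using coord_abs_le_norm (g ω) i
    have hXi_int : Integrable (fun ω => X ω i) μ := by
      apply Integrable.mono' hXint.norm
        ((EuclideanSpace.proj (𝕜 := ℝ) i).continuous.comp_aestronglyMeasurable hXμ)
      filter_upwards with ω
      simpa [Real.norm_eq_abs] using coord_abs_le_norm (X ω) i
    refine ae_eq_condExp_of_forall_setIntegral_eq (μ := μ) hm hgi_int ?_ ?_ ?_
    · exact fun s _ _ => hXi_int.integrableOn
    · intro s hs hμs
      have hsm : MeasurableSet[m0] s := hm s hs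
      have hXg_set : ∫ ω in s, X ω ∂μ = ∫ ω in s, g ω ∂μ := by
        rw [← setIntegral_condExp hm hgint hs]
        exact setIntegral_congr_ae hsm (hunb.mono fun ω h _ => h.symm)
      have h1 := (EuclideanSpace.proj (𝕜 := ℝ) i).integral_comp_comm
        (hXint.integrableOn (s := s))
      have h2 := (EuclideanSpace.proj (𝕜 := ℝ) i).integral_comp_comm
        (hgint.integrableOn (s := s))
      calc ∫ ω in s, X ω i ∂μ = (∫ ω in s, X ω ∂μ) i := h1
        _ = (∫ ω in s, g ω ∂μ) i := by rw [hXg_set]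
        _ = ∫ ω in s, g ω i ∂μ := h2.symm
    · exact StronglyMeasurable.aestronglyMeasurable ((EuclideanSpace.proj (𝕜 := ℝ) i).continuous.comp_stronglyMeasurable
        hX)
  -- per-coordinate integral identity
  have hcoord : ∀ i : Fin d, ∫ ω, X ω i * g ω i ∂μ = ∫ ω, X ω i * X ω i ∂μ := by
    intro i
    have hXi_sm : StronglyMeasurable[m] (fun ω => X ω i) :=
      (EuclideanSpace.proj (𝕜 := ℝ) i).continuous.comp_stronglyMeasurable hX
    have hgi_int : Integrable (fun ω => g ω i) μ := by
      apply Integrable.mono' (habs g hgm hg2).norm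
        ((EuclideanSpace.proj (𝕜 := ℝ) i).continuous.comp_aestronglyMeasurable hgm)
      filter_upwards with ω
      simpa [Real.norm_eq_abs] using coord_abs_le_norm (g ω) i
    have hpull := condExp_mul_of_stronglyMeasurable_left (μ := μ) hXi_sm
      (by exact hXgi i) hgi_int
    calc ∫ ω, X ω i * g ω i ∂μ = ∫ ω, (μ[(fun ω => X ω i) * (fun ω => g ω i)|m]) ω ∂μ := by
          rw [integral_condExp hm]; rfl
      _ = ∫ ω, ((fun ω => X ω i) * μ[(fun ω => g ω i)|m]) ω ∂μ := integral_congr_ae hpull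
      _ = ∫ ω, X ω i * X ω i ∂μ := by
          apply integral_congr_ae
          filter_upwards [hcond i] with ω hω
          simp [Pi.mul_apply, ← hω]
  -- sum over coordinates
  have hinner_sum : ∀ ω, @inner ℝ _ _ (X ω) (g ω) = ∑ i, X ω i * g ω i := by
    intro ω
    simp [PiLp.inner_apply, RCLike.inner_apply, starRingEnd_apply]
    exact Finset.sum_congr rfl (fun i _ => mul_comm _ _)
  have hnorm_sum : ∀ ω, ‖X ω‖ ^ 2 = ∑ i, X ω i * X ω i := by
    intro ω
    rw [EuclideanSpace.norm_sq_eq]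
    exact Finset.sum_congr rfl (fun i _ => by rw [Real.norm_eq_abs, sq_abs, sq])
  calc ∫ ω, @inner ℝ _ _ (X ω) (g ω) ∂μ = ∫ ω, ∑ i, X ω i * g ω i ∂μ := by
        simp_rw [hinner_sum]
    _ = ∑ i, ∫ ω, X ω i * g ω i ∂μ := integral_finset_sum _ (fun i _ => hXgi i)
    _ = ∑ i, ∫ ω, X ω i * X ω i ∂μ := Finset.sum_congr rfl (fun i _ => hcoord i)
    _ = ∫ ω, ∑ i, X ω i * X ω i ∂μ := (integral_finset_sum _ (fun i _ => hXXi i)).symm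
    _ = ∫ ω, ‖X ω‖ ^ 2 ∂μ := by simp_rw [hnorm_sum]

end CE
end Seq

set_option maxHeartbeats 1000000 in
/-- under the SGD setup with `∑ α_m = ∞`, `∑ α_m² < ∞`, `0 ≤ α_m ≤ 1/L`,
`E[f(w_0)] < ∞`, and `f` coercive, the iterates converge in probability to the critical
set `𝓒 = {x : ∇f(x) = 0}`: for every `ε > 0`, `P(dist(w_m, 𝓒) > ε) → 0`. -/
theorem stmt10 {d : ℕ} (f : EuclideanSpace ℝ (Fin d) → ℝ) (L σ : ℝ)
        (hf : ContDiff ℝ 2 f) (hf0 : ∀ x, 0 ≤ f x)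
        (hHess : ∀ x, ‖fderiv ℝ (gradient f) x‖ ≤ L) (hL : 0 < L)
        {Ω : Type*} [inst : MeasurableSpace Ω] (μ : Measure Ω) [IsProbabilityMeasure μ]
        (𝓕 : ℕ → MeasurableSpace Ω) (h𝓕 : ∀ m, 𝓕 m ≤ inst)
        (w g : ℕ → Ω → EuclideanSpace ℝ (Fin d)) (α : ℕ → ℝ)
        (hw : ∀ m, StronglyMeasurable[𝓕 m] (w m))
        (hg : ∀ m, AEStronglyMeasurable (g m) μ)
        (hiter : ∀ m, ∀ ω, w (m + 1) ω = w m ω - α m • g m ω)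
        (hunbiased : ∀ m, μ[g m | 𝓕 m] =ᵐ[μ] fun ω => gradient f (w m ω))
        (hg2 : ∀ m, Integrable (fun ω => ‖g m ω‖ ^ 2) μ)
        (hvar : ∀ m, ∫ ω, (‖g m ω‖ ^ 2 - ‖gradient f (w m ω)‖ ^ 2) ∂μ ≤ σ ^ 2)
        (hα : ∀ m, 0 ≤ α m) (hαL : ∀ m, α m ≤ 1 / L)
    (hdiv : Tendsto (fun M => ∑ m ∈ Finset.range M, α m) atTop atTop)
    (hsq : Summable (fun m => (α m) ^ 2))
    (hint : Integrable (fun ω => f (w 0 ω)) μ)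
    (hcoer : Tendsto f (cocompact (EuclideanSpace ℝ (Fin d))) atTop) :
    ∀ ε : ℝ, 0 < ε →
      Tendsto (fun m => μ {ω | ε < Metric.infDist (w m ω) {x | gradient f x = 0}})
        atTop (nhds 0) := by
  intro ε hε
  set 𝓒 : Set (EuclideanSpace ℝ (Fin d)) := {x | gradient f x = 0} with h𝓒
  set D : ℕ → Ω → EuclideanSpace ℝ (Fin d) := fun m ω => gradient f (w m ω) with hD
  have hσ2 : (0:ℝ) ≤ σ ^ 2 := sq_nonneg σ
  have hlip := grad_lipschitz hf hL hHess
  have hdesc := descent hf hL hlip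
  have hgradsq := grad_sq_le hL hf0 hdesc
  have hDcont : Continuous (gradient f) := grad_cont hf
  have hwμ : ∀ m, AEStronglyMeasurable (w m) μ :=
    fun m => ((hw m).mono (h𝓕 m)).aestronglyMeasurable
  have hDsm : ∀ m, StronglyMeasurable[𝓕 m] (D m) :=
    fun m => hDcont.comp_stronglyMeasurable (hw m)
  have hDμ : ∀ m, AEStronglyMeasurable (D m) μ :=
    fun m => ((hDsm m).mono (h𝓕 m)).aestronglyMeasurable
  have hfwμ : ∀ m, AEStronglyMeasurable (fun ω => f (w m ω)) μ :=
    fun m => hf.continuous.comp_aestronglyMeasurable (hwμ m)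
  have hαL' : ∀ m, L * α m ≤ 1 := by
    intro m
    have h := hαL m
    rw [le_div_iff₀ hL] at h
    linarith
  -- pointwise descent inequality along the iteration
  have hptwise : ∀ m ω, f (w (m+1) ω) ≤ f (w m ω) - α m * (@inner ℝ _ _ (D m ω) (g m ω))
      + L / 2 * α m ^ 2 * ‖g m ω‖ ^ 2 := by
    intro m ω
    have h := hdesc (w m ω) (w (m+1) ω)
    have hstep : w (m+1) ω - w m ω = -(α m • g m ω) := by rw [hiter m ω]; abel
    rw [hstep] at h
    have e2 : @inner ℝ _ _ (D m ω) (-(α m • g m ω))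
        = -(α m * @inner ℝ _ _ (D m ω) (g m ω)) := by
      rw [inner_neg_right, real_inner_smul_right]
    have e3 : ‖-(α m • g m ω)‖ ^ 2 = α m ^ 2 * ‖g m ω‖ ^ 2 := by
      rw [norm_neg, norm_smul, Real.norm_eq_abs, abs_of_nonneg (hα m), mul_pow]
    rw [e2, e3] at h
    calc f (w (m+1) ω) ≤ f (w m ω) + -(α m * @inner ℝ _ _ (D m ω) (g m ω))
          + L / 2 * (α m ^ 2 * ‖g m ω‖ ^ 2) := h
      _ = f (w m ω) - α m * (@inner ℝ _ _ (D m ω) (g m ω))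
          + L / 2 * α m ^ 2 * ‖g m ω‖ ^ 2 := by ring
  -- integrability of f (w m)
  have hfint : ∀ m, Integrable (fun ω => f (w m ω)) μ := by
    intro m
    induction m with
    | zero => exact hint
    | succ m ih =>
      have hD2 : Integrable (fun ω => ‖D m ω‖ ^ 2) μ := by
        apply Integrable.mono' (ih.const_mul (2 * L))
          ((continuous_norm.pow 2).comp_aestronglyMeasurable (hDμ m))
        filter_upwards with ω
        rw [Real.norm_eq_abs, abs_of_nonneg (sq_nonneg _)]
        exact hgradsq (w m ω)
      have hinner : Integrable (fun ω => @inner ℝ _ _ (D m ω) (g m ω)) μ := by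
        have hbd : Integrable (fun ω => (‖D m ω‖ ^ 2 + ‖g m ω‖ ^ 2) / 2) μ :=
          (hD2.add (hg2 m)).div_const 2
        apply Integrable.mono' hbd ((hDμ m).inner (hg m))
        filter_upwards with ω
        rw [Real.norm_eq_abs]
        have h1 := abs_real_inner_le_norm (D m ω) (g m ω)
        have h2 : ‖D m ω‖ * ‖g m ω‖ ≤ (‖D m ω‖ ^ 2 + ‖g m ω‖ ^ 2) / 2 := by
          nlinarith [sq_nonneg (‖D m ω‖ - ‖g m ω‖)]
        linarith
      have hub : Integrable (fun ω => f (w m ω) - α m * @inner ℝ _ _ (D m ω) (g m ω)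
          + L / 2 * α m ^ 2 * ‖g m ω‖ ^ 2) μ :=
        (ih.sub (hinner.const_mul (α m))).add ((hg2 m).const_mul (L / 2 * α m ^ 2))
      apply Integrable.mono' hub (hfwμ (m+1))
      filter_upwards with ω
      rw [Real.norm_eq_abs, abs_of_nonneg (hf0 _)]
      exact hptwise m ω
  -- integrability of ‖D m‖² and inner products
  have hD2int : ∀ m, Integrable (fun ω => ‖D m ω‖ ^ 2) μ := by
    intro m
    apply Integrable.mono' ((hfint m).const_mul (2 * L))
      ((continuous_norm.pow 2).comp_aestronglyMeasurable (hDμ m))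
    filter_upwards with ω
    rw [Real.norm_eq_abs, abs_of_nonneg (sq_nonneg _)]
    exact hgradsq (w m ω)
  have hinner_int : ∀ m, Integrable (fun ω => @inner ℝ _ _ (D m ω) (g m ω)) μ := by
    intro m
    have hbd : Integrable (fun ω => (‖D m ω‖ ^ 2 + ‖g m ω‖ ^ 2) / 2) μ :=
      ((hD2int m).add (hg2 m)).div_const 2
    apply Integrable.mono' hbd ((hDμ m).inner (hg m))
    filter_upwards with ω
    rw [Real.norm_eq_abs]
    have h1 := abs_real_inner_le_norm (D m ω) (g m ω)
    have h2 : ‖D m ω‖ * ‖g m ω‖ ≤ (‖D m ω‖ ^ 2 + ‖g m ω‖ ^ 2) / 2 := by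
      nlinarith [sq_nonneg (‖D m ω‖ - ‖g m ω‖)]
    linarith
  -- key conditional expectation identity
  have hkey : ∀ m, ∫ ω, @inner ℝ _ _ (D m ω) (g m ω) ∂μ = ∫ ω, ‖D m ω‖ ^ 2 ∂μ :=
    fun m => inner_condexp_integral μ (h𝓕 m) (g m) (D m) (hDsm m) (hg m)
      (hg2 m) (hD2int m) (hunbiased m)
  set F : ℕ → ℝ := fun m => ∫ ω, f (w m ω) ∂μ with hFdef
  set G : ℕ → ℝ := fun m => ∫ ω, ‖D m ω‖ ^ 2 ∂μ with hGdef
  have hF0 : ∀ m, 0 ≤ F m := fun m => integral_nonneg (fun ω => hf0 _)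
  have hG0 : ∀ m, 0 ≤ G m := fun m => integral_nonneg (fun ω => by positivity)
  have hGF : ∀ m, G m ≤ 2 * L * F m := by
    intro m
    have h1 : G m ≤ ∫ ω, 2 * L * f (w m ω) ∂μ :=
      integral_mono (hD2int m) ((hfint m).const_mul (2 * L)) (fun ω => hgradsq (w m ω))
    rwa [integral_const_mul] at h1
  have hg2le : ∀ m, ∫ ω, ‖g m ω‖ ^ 2 ∂μ ≤ G m + σ ^ 2 := by
    intro m
    have h1 := hvar m
    rw [integral_sub (hg2 m) (hD2int m)] at h1
    linarith
  -- main recursion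
  have hrec : ∀ m, F (m+1) ≤ F m - α m / 2 * G m + L / 2 * α m ^ 2 * σ ^ 2 := by
    intro m
    have h1 : F (m+1) ≤ F m - α m * (∫ ω, @inner ℝ _ _ (D m ω) (g m ω) ∂μ)
        + L / 2 * α m ^ 2 * ∫ ω, ‖g m ω‖ ^ 2 ∂μ := by
      have ia : Integrable (fun ω => f (w m ω) - α m * @inner ℝ _ _ (D m ω) (g m ω)) μ :=
        (hfint m).sub ((hinner_int m).const_mul (α m))
      have ib : Integrable (fun ω => L / 2 * α m ^ 2 * ‖g m ω‖ ^ 2) μ :=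
        (hg2 m).const_mul (L / 2 * α m ^ 2)
      have ic : Integrable (fun ω => α m * @inner ℝ _ _ (D m ω) (g m ω)) μ :=
        (hinner_int m).const_mul (α m)
      have h2 : F (m+1) ≤ ∫ ω, (f (w m ω) - α m * @inner ℝ _ _ (D m ω) (g m ω)
          + L / 2 * α m ^ 2 * ‖g m ω‖ ^ 2) ∂μ :=
        integral_mono (hfint (m+1)) (ia.add ib) (fun ω => hptwise m ω)
      rw [integral_add ia ib, integral_sub (hfint m) ic,
        integral_const_mul, integral_const_mul] at h2
      exact h2
    rw [hkey m] at h1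
    have h3 : L / 2 * α m ^ 2 * ∫ ω, ‖g m ω‖ ^ 2 ∂μ
        ≤ L / 2 * α m ^ 2 * (G m + σ ^ 2) :=
      mul_le_mul_of_nonneg_left (hg2le m) (by positivity)
    have h4 : L * α m * α m ≤ α m := by
      have := mul_le_mul_of_nonneg_right (hαL' m) (hα m)
      linarith [this]
    have h5 : L * α m * α m * G m ≤ α m * G m :=
      mul_le_mul_of_nonneg_right h4 (hG0 m)
    nlinarith [h1, h3, h5]
  -- uniform bound on F
  set S : ℝ := ∑' m, α m ^ 2 with hSdef
  have hS0 : 0 ≤ S := tsum_nonneg (fun m => sq_nonneg _)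
  set B : ℝ := F 0 + L / 2 * σ ^ 2 * S with hBdef
  have hB0 : 0 ≤ B := by
    have : 0 ≤ L / 2 * σ ^ 2 * S := by positivity
    have := hF0 0
    rw [hBdef]; linarith
  have hFB : ∀ m, F m ≤ B := by
    intro m
    have hpart : F m ≤ F 0 + L / 2 * σ ^ 2 * ∑ k ∈ Finset.range m, α k ^ 2 := by
      induction m with
      | zero => simp
      | succ m ih =>
        have h1 := hrec m
        have h2 : 0 ≤ α m / 2 * G m := mul_nonneg (by linarith [hα m]) (hG0 m)
        rw [Finset.sum_range_succ, mul_add]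
        have h6 : L / 2 * α m ^ 2 * σ ^ 2 = L / 2 * σ ^ 2 * α m ^ 2 := by ring
        linarith [h1, ih]
    have hple : ∑ k ∈ Finset.range m, α k ^ 2 ≤ S :=
      Summable.sum_le_tsum _ (fun k _ => sq_nonneg _) hsq
    have : L / 2 * σ ^ 2 * ∑ k ∈ Finset.range m, α k ^ 2 ≤ L / 2 * σ ^ 2 * S :=
      mul_le_mul_of_nonneg_left hple (by positivity)
    rw [hBdef]; linarith
  -- summability of α * G
  have hsummable : Summable (fun m => α m * G m) := by
    have hpartial : ∀ M, ∑ m ∈ Finset.range M, α m / 2 * G m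
        ≤ F 0 - F M + L / 2 * σ ^ 2 * ∑ m ∈ Finset.range M, α m ^ 2 := by
      intro M
      induction M with
      | zero => simp
      | succ M ih =>
        have h1 := hrec M
        rw [Finset.sum_range_succ, Finset.sum_range_succ, mul_add]
        have h6 : L / 2 * α M ^ 2 * σ ^ 2 = L / 2 * σ ^ 2 * α M ^ 2 := by ring
        linarith
    have hbd : ∀ M, ∑ m ∈ Finset.range M, α m * G m ≤ 2 * B := by
      intro M
      have h1 := hpartial M
      have h2 : ∑ m ∈ Finset.range M, α m * G m
          = 2 * ∑ m ∈ Finset.range M, α m / 2 * G m := by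
        rw [Finset.mul_sum]
        exact Finset.sum_congr rfl (fun m _ => by ring)
      have h3 : ∑ m ∈ Finset.range M, α m ^ 2 ≤ S :=
        Summable.sum_le_tsum _ (fun k _ => sq_nonneg _) hsq
      have h4 : L / 2 * σ ^ 2 * ∑ m ∈ Finset.range M, α m ^ 2 ≤ L / 2 * σ ^ 2 * S :=
        mul_le_mul_of_nonneg_left h3 (by positivity)
      have h5 := hF0 M
      rw [h2, hBdef]
      linarith
    exact summable_of_sum_range_le (fun n => mul_nonneg (hα n) (hG0 n)) hbd
  -- step bound on G
  set C : ℝ := L * (6 * L * B + 2 * σ ^ 2) + 1 with hCdef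
  have hC : 0 < C := by
    have h1 : 0 ≤ L * (6 * L * B + 2 * σ ^ 2) := by
      apply mul_nonneg hL.le
      nlinarith [hB0, hσ2, hL.le]
    rw [hCdef]; linarith
  have hGstep : ∀ m, G (m+1) ≤ G m + C * α m := by
    intro m
    have hpt : ∀ ω, ‖D (m+1) ω‖ ^ 2
        ≤ ‖D m ω‖ ^ 2 + L * α m * (‖D m ω‖ ^ 2 + 2 * ‖g m ω‖ ^ 2) := by
      intro ω
      have h1 : ‖D (m+1) ω - D m ω‖ ≤ L * (α m * ‖g m ω‖) := by
        have h2 := hlip (w (m+1) ω) (w m ω)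
        have h3 : w (m+1) ω - w m ω = -(α m • g m ω) := by rw [hiter m ω]; abel
        rw [h3] at h2
        rw [norm_neg, norm_smul, Real.norm_eq_abs, abs_of_nonneg (hα m)] at h2
        exact h2
      have h4 : ‖D (m+1) ω‖ ≤ ‖D m ω‖ + L * (α m * ‖g m ω‖) := by
        have := norm_sub_norm_le (D (m+1) ω) (D m ω)
        linarith
      have h5 : 0 ≤ L * α m := mul_nonneg hL.le (hα m)
      have h6 := hαL' m
      have e1 : ‖D (m+1) ω‖ ^ 2 ≤ (‖D m ω‖ + L * (α m * ‖g m ω‖)) ^ 2 :=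
        pow_le_pow_left₀ (norm_nonneg _) h4 2
      have e2 : 2 * ‖D m ω‖ * ‖g m ω‖ ≤ ‖D m ω‖ ^ 2 + ‖g m ω‖ ^ 2 := by
        nlinarith [sq_nonneg (‖D m ω‖ - ‖g m ω‖)]
      have e3 : (L * α m) ^ 2 ≤ L * α m := by nlinarith
      have e4 := mul_le_mul_of_nonneg_left e2 h5
      have e5 := mul_le_mul_of_nonneg_right e3 (sq_nonneg (‖g m ω‖))
      nlinarith [e1, e4, e5]
    have ia : Integrable (fun ω => ‖D m ω‖ ^ 2 + 2 * ‖g m ω‖ ^ 2) μ :=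
      (hD2int m).add ((hg2 m).const_mul 2)
    have ib : Integrable (fun ω => L * α m * (‖D m ω‖ ^ 2 + 2 * ‖g m ω‖ ^ 2)) μ :=
      ia.const_mul (L * α m)
    have ic : Integrable (fun ω => 2 * ‖g m ω‖ ^ 2) μ := (hg2 m).const_mul 2
    have h7 : G (m+1) ≤ ∫ ω, (‖D m ω‖ ^ 2 + L * α m * (‖D m ω‖ ^ 2 + 2 * ‖g m ω‖ ^ 2)) ∂μ :=
      integral_mono (hD2int (m+1)) ((hD2int m).add ib) hpt
    rw [integral_add (hD2int m) ib, integral_const_mul,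
      integral_add (hD2int m) ic, integral_const_mul] at h7
    have h8 : ∫ ω, ‖g m ω‖ ^ 2 ∂μ ≤ G m + σ ^ 2 := hg2le m
    have h9 : G m ≤ 2 * L * B := le_trans (hGF m) (by nlinarith [hFB m, hL.le])
    have h10 : 0 ≤ L * α m := mul_nonneg hL.le (hα m)
    have h11 : L * α m * (G m + 2 * (G m + σ ^ 2)) ≤ C * α m := by
      have h12 : G m + 2 * (G m + σ ^ 2) ≤ 6 * L * B + 2 * σ ^ 2 := by
        nlinarith [h9, hσ2, hB0, hL.le, hG0 m]
      have h13 : L * α m * (G m + 2 * (G m + σ ^ 2)) ≤ L * α m * (6 * L * B + 2 * σ ^ 2) :=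
        mul_le_mul_of_nonneg_left h12 h10
      have h14 : L * α m * (6 * L * B + 2 * σ ^ 2) ≤ C * α m := by
        rw [hCdef]
        have := hα m
        nlinarith
      linarith
    have h15 : L * α m * (G m + 2 * ∫ ω, ‖g m ω‖ ^ 2 ∂μ)
        ≤ L * α m * (G m + 2 * (G m + σ ^ 2)) := by
      apply mul_le_mul_of_nonneg_left _ h10
      linarith
    linarith
  -- α tends to zero
  have hα0 : Tendsto α atTop (nhds 0) := by
    have h1 : Tendsto (fun m => α m ^ 2) atTop (nhds 0) := hsq.tendsto_atTop_zero
    have h2 : Tendsto (fun m => Real.sqrt (α m ^ 2)) atTop (nhds (Real.sqrt 0)) :=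
      (Real.continuous_sqrt.tendsto 0).comp h1
    rw [Real.sqrt_zero] at h2
    refine h2.congr (fun m => ?_)
    rw [Real.sqrt_sq (hα m)]
  have hGto0 : Tendsto G atTop (nhds 0) :=
    seq_to_zero hC hα hG0 hGstep hα0 hsummable hdiv
  -- final assembly
  rw [ENNReal.tendsto_nhds_zero]
  intro η hη
  by_cases hηtop : η = ⊤
  · filter_upwards with m; rw [hηtop]; exact le_top
  set r : ℝ := η.toReal with hrdef
  have hr : 0 < r := ENNReal.toReal_pos hη.ne' hηtop
  have hηr : ENNReal.ofReal r = η := ENNReal.ofReal_toReal hηtop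
  set R : ℝ := 4 * (B + 1) / r with hRdef
  have hR : 0 < R := by positivity
  -- compact sublevel set
  have hcc : ∀ᶠ x in cocompact (EuclideanSpace ℝ (Fin d)), R < f x :=
    hcoer.eventually (eventually_gt_atTop R)
  obtain ⟨K, hKcomp, hKsub⟩ := Filter.mem_cocompact.mp hcc
  set A : Set (EuclideanSpace ℝ (Fin d)) := K ∩ {x | ε ≤ Metric.infDist x 𝓒} with hAdef
  have hAcomp : IsCompact A :=
    hKcomp.inter_right (isClosed_le continuous_const (Metric.continuous_infDist_pt 𝓒))
  have hδex : ∃ δ > 0, ∀ x ∈ A, δ ≤ ‖gradient f x‖ ^ 2 := by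
    rcases A.eq_empty_or_nonempty with hA | hA
    · exact ⟨1, one_pos, fun x hx => by rw [hA] at hx; exact absurd hx (Set.notMem_empty x)⟩
    · obtain ⟨x₀, hx₀A, hmin⟩ := hAcomp.exists_isMinOn hA
        (((hDcont.norm).pow 2).continuousOn)
      refine ⟨‖gradient f x₀‖ ^ 2, ?_, fun x hx => hmin hx⟩
      rcases eq_or_lt_of_le (sq_nonneg ‖gradient f x₀‖) with h | h
      · exfalso
        have h1 : gradient f x₀ = 0 := by
          have := h.symm
          rwa [pow_eq_zero_iff (two_ne_zero), norm_eq_zero] at this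
        have h2 : x₀ ∈ 𝓒 := h1
        have h3 : Metric.infDist x₀ 𝓒 = 0 := Metric.infDist_zero_of_mem h2
        have h4 := hx₀A.2
        rw [Set.mem_setOf_eq, h3] at h4
        linarith
      · exact h
  obtain ⟨δ, hδ0, hδle⟩ := hδex
  -- Markov bounds
  have hM1 : ∀ m, μ {ω | R ≤ f (w m ω)} ≤ ENNReal.ofReal (r / 4) := by
    intro m
    have h1 := mul_meas_ge_le_integral_of_nonneg
      (Filter.Eventually.of_forall (fun ω => hf0 (w m ω))) (hfint m) R
    have h2 : (μ {ω | R ≤ f (w m ω)}).toReal ≤ B / R := by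
      rw [le_div_iff₀ hR]
      calc (μ {ω | R ≤ f (w m ω)}).toReal * R
          = R * (μ {ω | R ≤ f (w m ω)}).toReal := by ring
        _ ≤ F m := h1
        _ ≤ B := hFB m
    have h3 : B / R ≤ r / 4 := by
      have h4 : R * (r / 4) = B + 1 := by
        rw [hRdef]; field_simp
      rw [div_le_iff₀ hR, mul_comm]
      linarith
    rw [ENNReal.le_ofReal_iff_toReal_le (measure_ne_top μ _) (by positivity)]
    linarith
  have hM2 : ∀ᶠ m in atTop, μ {ω | δ ≤ ‖D m ω‖ ^ 2} ≤ ENNReal.ofReal (r / 4) := by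
    have hev : ∀ᶠ m in atTop, G m < δ * (r / 4) :=
      hGto0.eventually (gt_mem_nhds (by positivity))
    filter_upwards [hev] with m hm
    have h1 := mul_meas_ge_le_integral_of_nonneg
      (Filter.Eventually.of_forall (fun ω => sq_nonneg ‖D m ω‖)) (hD2int m) δ
    have h2 : (μ {ω | δ ≤ ‖D m ω‖ ^ 2}).toReal ≤ r / 4 := by
      have h3 : δ * (μ {ω | δ ≤ ‖D m ω‖ ^ 2}).toReal ≤ G m := h1
      have h4 : δ * (μ {ω | δ ≤ ‖D m ω‖ ^ 2}).toReal < δ * (r / 4) := by linarith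
      exact le_of_lt ((mul_lt_mul_iff_right₀ hδ0).mp h4)
    rw [ENNReal.le_ofReal_iff_toReal_le (measure_ne_top μ _) (by positivity)]
    exact h2
  -- inclusion of events
  have hincl : ∀ m, {ω | ε < Metric.infDist (w m ω) 𝓒}
      ⊆ {ω | R ≤ f (w m ω)} ∪ {ω | δ ≤ ‖D m ω‖ ^ 2} := by
    intro m ω hω
    rw [Set.mem_setOf_eq] at hω
    by_cases hfR : R ≤ f (w m ω)
    · exact Or.inl hfR
    · right
      push_neg at hfR
      have hK : w m ω ∈ K := by
        by_contra hnK
        have := hKsub hnK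
        rw [Set.mem_setOf_eq] at this
        linarith
      have hA : w m ω ∈ A := ⟨hK, le_of_lt hω⟩
      exact hδle (w m ω) hA
  filter_upwards [hM2] with m hm2
  calc μ {ω | ε < Metric.infDist (w m ω) 𝓒}
      ≤ μ ({ω | R ≤ f (w m ω)} ∪ {ω | δ ≤ ‖D m ω‖ ^ 2}) := measure_mono (hincl m)
    _ ≤ μ {ω | R ≤ f (w m ω)} + μ {ω | δ ≤ ‖D m ω‖ ^ 2} := measure_union_le _ _
    _ ≤ ENNReal.ofReal (r / 4) + ENNReal.ofReal (r / 4) := add_le_add (hM1 m) hm2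
    _ = ENNReal.ofReal (r / 2) := by
        rw [← ENNReal.ofReal_add (by positivity) (by positivity)]
        congr 1
        ring
    _ ≤ ENNReal.ofReal r := ENNReal.ofReal_le_ofReal (by linarith)
    _ = η := hηr
end
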